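/- Let Ψ ⊆ ℚ_{>0} be a DCC set with infimum δ > 0, let q' be a positive integer and M ≥ 0 a rational bound. Define Ψ' := { a₀ − Σ_{i=1}^{l} a_i : a₀ ∈ (1/q')ℤ ∩ [0, M], a_i ∈ Ψ, l ≤ M/δ }. Then Ψ' satisfies the ascending chain condition; consequently Ψ ∩ Ψ' is a finite set. -/

import Mathlib

/-!
Since `Ψ` is well-ordered, so is every iterated sumset `l • Ψ` (Neumann: a sum of two partially
well-ordered sets is partially well-ordered), hence also the finite union `T = ⋃_{l ≤ M/δ} l • Ψ`.
The admissible `a₀` form a finite set `S`, so `Ψ' ⊆ S - T = -(T - S)` with `T - S` well-ordered,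
and an increasing sequence in `Ψ'` would give a decreasing one in `T - S`. Finally `Ψ ∩ Ψ'` is
well-ordered both ways, hence finite.
-/

open Pointwise

namespace Set

theorem isWF_of_not_exists_strictAnti {α : Type*} [Preorder α] {s : Set α}
    (h : ¬ ∃ f : ℕ → α, (∀ n, f n ∈ s) ∧ StrictAnti f) : s.IsWF :=
  isWF_iff_no_descending_seq.2 fun f hf hs => h ⟨f, hs, hf⟩

theorem IsPWO.finite_of_not_exists_strictMono {α : Type*} [PartialOrder α] {s : Set α}
    (hs : s.IsPWO) (h : ¬ ∃ f : ℕ → α, (∀ n, f n ∈ s) ∧ StrictMono f) : s.Finite := by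
  by_contra hinf
  let e := Set.Infinite.natEmbedding s hinf
  obtain ⟨g, hg⟩ := hs.exists_monotone_subseq fun n => (e n).2
  have hinj : Function.Injective fun n => (e (g n) : α) :=
    Subtype.val_injective.comp (e.injective.comp g.injective)
  exact h ⟨fun n => e (g n), fun n => (e (g n)).2, hg.strictMono_of_injective hinj⟩

theorem IsPWO.nsmul {α : Type*} [AddCommMonoid α] [PartialOrder α] [IsOrderedCancelAddMonoid α]
    {s : Set α} (hs : s.IsPWO) : ∀ n : ℕ, (n • s).IsPWO
  | 0 => by rw [zero_nsmul]; exact isPWO_singleton 0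
  | n + 1 => by rw [succ_nsmul]; exact (hs.nsmul n).add hs

theorem not_exists_strictMono_of_finite_sub_isPWO {α : Type*} [AddCommGroup α] [PartialOrder α]
    [IsOrderedAddMonoid α] {s t : Set α} (hs : s.Finite) (ht : t.IsPWO) :
    ¬ ∃ f : ℕ → α, (∀ n, f n ∈ s - t) ∧ StrictMono f := by
  rintro ⟨f, hf, hmono⟩
  have hwf : (t - s).IsWF := by
    rw [sub_eq_add_neg]
    exact (ht.add hs.neg.isPWO).isWF
  refine isWF_iff_no_descending_seq.1 hwf (fun n => -f n) (fun m n h => neg_lt_neg (hmono h))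
    fun n => ?_
  rw [← neg_sub]
  exact neg_mem_neg.2 (hf n)

theorem finite_setOf_div_intCast_mem_Icc {α : Type*} [Field α] [LinearOrder α]
    [IsStrictOrderedRing α] [FloorRing α] {q : α} (hq : 0 < q) (a b : α) :
    {x : α | (∃ n : ℤ, x = n / q) ∧ a ≤ x ∧ x ≤ b}.Finite := by
  refine ((Set.finite_Icc ⌊a * q⌋ ⌈b * q⌉).image fun n : ℤ => (n : α) / q).subset ?_
  rintro x ⟨⟨n, rfl⟩, hax, hxb⟩
  refine ⟨n, ⟨?_, ?_⟩, rfl⟩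
  · exact_mod_cast (Int.floor_le _).trans ((le_div_iff₀ hq).1 hax)
  · exact_mod_cast ((div_le_iff₀ hq).1 hxb).trans (Int.le_ceil _)

end Set

theorem acc_of_dcc_sums_general (Ψ : Set ℚ)
    (hDCC : ¬ ∃ f : ℕ → ℚ, (∀ n, f n ∈ Ψ) ∧ StrictAnti f)
    (δ : ℚ)
    (q' : ℕ) (hq' : 0 < q') (M : ℚ)
    (Ψ' : Set ℚ)
    (hΨ' : Ψ' = { x : ℚ | ∃ (a₀ : ℚ) (l : ℕ) (a : Fin l → ℚ),
        (∃ n : ℤ, a₀ = (n : ℚ) / (q' : ℚ)) ∧ 0 ≤ a₀ ∧ a₀ ≤ M ∧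
        (∀ i, a i ∈ Ψ) ∧ (l : ℚ) ≤ M / δ ∧ x = a₀ - ∑ i, a i }) :
    (¬ ∃ f : ℕ → ℚ, (∀ n, f n ∈ Ψ') ∧ StrictMono f) ∧ (Ψ ∩ Ψ').Finite := by
  have hΨ : Ψ.IsPWO := (Set.isWF_of_not_exists_strictAnti hDCC).isPWO
  set S := {x : ℚ | (∃ n : ℤ, x = n / q') ∧ 0 ≤ x ∧ x ≤ M}
  set T := ⋃ l ∈ Finset.range (⌊M / δ⌋₊ + 1), l • Ψ
  have hT : T.IsPWO := (Finset.isPWO_bUnion _).2 fun l _ => hΨ.nsmul l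
  have hsub : Ψ' ⊆ S - T := by
    rw [hΨ']
    rintro _ ⟨a₀, l, a, ha₀, h0, hM, ha, hl, rfl⟩
    refine Set.sub_mem_sub ⟨ha₀, h0, hM⟩ (Set.mem_biUnion (x := l) ?_ ?_)
    · exact Finset.mem_range_succ_iff.2 (Nat.le_floor hl)
    · exact Set.mem_nsmul_iff_sum.2 ⟨a, ha, rfl⟩
  have hACC : ¬ ∃ f : ℕ → ℚ, (∀ n, f n ∈ Ψ') ∧ StrictMono f := fun ⟨f, hf, hmono⟩ =>
    Set.not_exists_strictMono_of_finite_sub_isPWO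
      (Set.finite_setOf_div_intCast_mem_Icc (Nat.cast_pos.2 hq') 0 M) hT
      ⟨f, fun n => hsub (hf n), hmono⟩
  refine ⟨hACC, (hΨ.mono Set.inter_subset_left).finite_of_not_exists_strictMono ?_⟩
  exact fun ⟨f, hf, hmono⟩ => hACC ⟨f, fun n => (hf n).2, hmono⟩

/-- Let `Ψ ⊆ ℚ_{>0}` be a DCC set with infimum `δ > 0`, `q'` a positive integer and `M ≥ 0`
a rational bound.  Let
`Ψ' = { a₀ − Σ_{i=1}^{l} a_i : a₀ ∈ (1/q')ℤ ∩ [0, M], a_i ∈ Ψ, l ≤ M/δ }`.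
Then `Ψ'` satisfies the ascending chain condition, and consequently `Ψ ∩ Ψ'` is finite. -/
theorem acc_of_dcc_sums (Ψ : Set ℚ) (hpos : ∀ a ∈ Ψ, 0 < a)
    (hDCC : ¬ ∃ f : ℕ → ℚ, (∀ n, f n ∈ Ψ) ∧ StrictAnti f)
    (δ : ℚ) (hδpos : 0 < δ) (hglb : IsGLB Ψ δ)
    (q' : ℕ) (hq' : 0 < q') (M : ℚ) (hM : 0 ≤ M)
    (Ψ' : Set ℚ)
    (hΨ' : Ψ' = { x : ℚ | ∃ (a₀ : ℚ) (l : ℕ) (a : Fin l → ℚ),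
        (∃ n : ℤ, a₀ = (n : ℚ) / (q' : ℚ)) ∧ 0 ≤ a₀ ∧ a₀ ≤ M ∧
        (∀ i, a i ∈ Ψ) ∧ (l : ℚ) ≤ M / δ ∧ x = a₀ - ∑ i, a i }) :
    (¬ ∃ f : ℕ → ℚ, (∀ n, f n ∈ Ψ') ∧ StrictMono f) ∧ (Ψ ∩ Ψ').Finite :=
  acc_of_dcc_sums_general Ψ hDCC δ q' hq' M Ψ' hΨ'
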